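/- Fix k ≥ 4, a k-critical graph H_0 with h vertices, and a graph H obtained from H_0 by adding t−h pendant edges, where t ≥ (1000kh)^{10}·h^{10k}. Set λ = 1/(2·10^8·h^4·k^4) and d = (1+λ)n/(k−1). Let χ be a 2-coloring of E(K_n) with the minimum number of monochromatic labeled copies of H, and let V_{RB} be the set of vertices of K_n whose red degree and blue degree under χ are both at least d. Then for all sufficiently large n, |V_{RB}| ≤ λn. -/

import Mathlib

open Filter

/-- Labeled copies of `F` in coloring `χ` with all edges of color `col`, image in `S`. -/
noncomputable def colorCopiesIn {α : Type*} [Fintype α] (F : SimpleGraph α)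
    {n c : ℕ} (χ : Sym2 (Fin n) → Fin c) (col : Fin c) (S : Set (Fin n)) : ℕ :=
  Set.ncard {f : α → Fin n | Function.Injective f ∧ (∀ v, f v ∈ S) ∧
    ∀ v w, F.Adj v w → χ s(f v, f w) = col}

noncomputable def colorCopies {α : Type*} [Fintype α] (F : SimpleGraph α)
    {n c : ℕ} (χ : Sym2 (Fin n) → Fin c) (col : Fin c) : ℕ :=
  colorCopiesIn F χ col Set.univ

/-- Monochromatic labeled copies of `F` in `χ`. -/
noncomputable def monoCopies {α : Type*} [Fintype α] (F : SimpleGraph α)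
    {n c : ℕ} (χ : Sym2 (Fin n) → Fin c) : ℕ :=
  Set.ncard {f : α → Fin n | Function.Injective f ∧
    ∃ col : Fin c, ∀ v w, F.Adj v w → χ s(f v, f w) = col}

/-- Minimum number of monochromatic labeled copies of `F` over all `c`-colorings of `E(K_n)`. -/
noncomputable def minMono {α : Type*} [Fintype α] (F : SimpleGraph α) (n c : ℕ) : ℕ :=
  ⨅ χ : Sym2 (Fin n) → Fin c, monoCopies F χ

/-- Degree of `v` in color `col`. -/
noncomputable def colorDeg {n c : ℕ} (χ : Sym2 (Fin n) → Fin c) (col : Fin c) (v : Fin n) : ℕ :=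
  Set.ncard {w : Fin n | w ≠ v ∧ χ s(v, w) = col}

/-- `H` is `k`-critical. -/
def IsKCritical {α : Type*} (H : SimpleGraph α) (k : ℕ) : Prop :=
  H.chromaticNumber = (k : ℕ∞) ∧
    ∃ e ∈ H.edgeSet, (H.deleteEdges {e}).chromaticNumber = ((k - 1 : ℕ) : ℕ∞)

/-- Every vertex outside `s` is a pendant vertex whose unique neighbor lies in `s`. -/
def PendantOutside {α : Type*} (H : SimpleGraph α) (s : Finset α) : Prop :=
  ∀ v ∉ s, ∃ w ∈ s, H.neighborSet v = {w}

/-- The Turán coloring of `E(K_n)` with `k-1` parts: edges within parts red (`0`),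
edges between parts blue (`1`). -/
def turanColoring (n k : ℕ) : Sym2 (Fin n) → Fin 2 :=
  Sym2.lift ⟨fun i j => if i.val % (k - 1) = j.val % (k - 1) then 0 else 1,
    fun i j => by
      dsimp only
      by_cases h : i.val % (k - 1) = j.val % (k - 1)
      · rw [if_pos h, if_pos h.symm]
      · rw [if_neg h, if_neg fun h' => h h'.symm]⟩

/-- The parameter `λ = 1/(2·10^8·h^4·k^4)`. -/
noncomputable def lamParam (h k : ℕ) : ℝ := 1 / (2 * 10 ^ 8 * (h : ℝ) ^ 4 * (k : ℝ) ^ 4)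

/-!
Suppose more than `λn` vertices have red and blue degree at least `d = (1 + λ)n/(k-1)`, and call
their set `W`. Since `R(h, h) ≤ 4^h`, double counting shows that a `1 / C(4^h, h)` fraction of the
`h`-subsets of `W` span monochromatic cliques. Mapping `H₀` onto such a clique and then each of the
`t - h` pendant vertices into the neighbourhood of its anchor in the colour of the clique (at least
`d - t` choices each) gives at least `c_h (λn/2)^h (d - t)^(t-h)` monochromatic copies of `H`,
where `c_h = 1 / (h! C(4^h, h))`.
The Turán colouring with `k - 1` parts has no blue copy, because `H₀` is not `(k-1)`-colourable,
and at most `n^h (n/(k-1) + 1)^(t-h)` red ones, because every pendant vertex must lie in the part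
of its anchor. As `d - t ≥ (1 + λ/2)(n/(k-1) + 1)` for large `n`, the factor `(1 + λ/2)^(t-h)`
beats `c_h⁻¹ (2/λ)^h` once `t` is as large as assumed, contradicting the minimality of `χ`.
-/

open Finset SimpleGraph
open scoped Nat

lemma PendantOutside.exists_anchor {α : Type*} {H : SimpleGraph α} {s : Finset α}
    (hp : PendantOutside H s) : ∃ w : α → α, ∀ v ∉ s, w v ∈ s ∧ ∀ u, H.Adj v u ↔ u = w v := by
  classical
  refine ⟨fun v => if hv : v ∈ s then v else (hp v hv).choose, fun v hv => ?_⟩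
  obtain ⟨hws, hw⟩ := (hp v hv).choose_spec
  simp only [hv, dite_false]
  exact ⟨hws, fun u => Set.ext_iff.1 hw u⟩

lemma IsKCritical.not_colorable {V : Type*} {G : SimpleGraph V} {k : ℕ} (hG : IsKCritical G k)
    (hk : 1 ≤ k) : ¬ G.Colorable (k - 1) := fun hc => by
  have := hG.1 ▸ hc.chromaticNumber_le
  norm_cast at this
  omega

lemma IsKCritical.le_card {V : Type*} [Fintype V] {G : SimpleGraph V} {k : ℕ}
    (hG : IsKCritical G k) : k ≤ Fintype.card V := by
  simpa [hG.1] using G.chromaticNumber_le_card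

section MonoCopies

variable {α : Type*} [Fintype α] {n c : ℕ}

open Classical in
noncomputable def monoCopyFinset (H : SimpleGraph α) (χ : Sym2 (Fin n) → Fin c) :
    Finset (α → Fin n) :=
  {f | Function.Injective f ∧ ∃ col, ∀ v u, H.Adj v u → χ s(f v, f u) = col}

variable {H : SimpleGraph α} {χ : Sym2 (Fin n) → Fin c} {f : α → Fin n}

lemma mem_monoCopyFinset : f ∈ monoCopyFinset H χ ↔
    Function.Injective f ∧ ∃ col, ∀ v u, H.Adj v u → χ s(f v, f u) = col := by
  simp [monoCopyFinset]

lemma card_monoCopyFinset : #(monoCopyFinset H χ) = monoCopies H χ := by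
  rw [monoCopies, ← Set.ncard_coe_finset]
  congr 1
  ext f
  exact mem_monoCopyFinset

lemma minMono_le (H : SimpleGraph α) (χ : Sym2 (Fin n) → Fin c) :
    minMono H n c ≤ monoCopies H χ :=
  ciInf_le (OrderBot.bddBelow _) χ

end MonoCopies

section Turan

lemma turanColoring_mk (n k : ℕ) (a b : Fin n) :
    turanColoring n k s(a, b) = if (a : ℕ) % (k - 1) = b % (k - 1) then 0 else 1 := rfl

lemma colorable_of_turanColoring_eq_one {α : Type*} {G : SimpleGraph α} {n k : ℕ} (hk : 2 ≤ k)
    (f : α → Fin n) (hf : ∀ v w, G.Adj v w → turanColoring n k s(f v, f w) = 1) :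
    G.Colorable (k - 1) :=
  ⟨Coloring.mk (fun v => ⟨f v % (k - 1), Nat.mod_lt _ (by omega)⟩) fun {v w} hvw h => by
    have := hf v w hvw
    simp_all [turanColoring_mk]⟩

variable {α : Type*} [Fintype α]

/-- Outside `s`, a map is determined by its values on `s` and the quotients `f v / m`. -/
theorem card_filter_mod_eq_le [DecidableEq α] (n m : ℕ) (s : Finset α) (w : α → α)
    (hw : ∀ v ∉ s, w v ∈ s) :
    #{f : α → Fin n | ∀ v ∉ s, (f v : ℕ) % m = f (w v) % m} ≤
      n ^ #s * (n / m + 1) ^ (Fintype.card α - #s) := by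
  have hcard : Fintype.card ((s → Fin n) × ((sᶜ : Finset α) → Fin (n / m + 1))) =
      n ^ #s * (n / m + 1) ^ (Fintype.card α - #s) := by
    simp
  rw [← hcard, ← card_univ]
  refine card_le_card_of_injOn (fun f => (fun v => f v, fun v =>
    ⟨f v / m, Nat.lt_succ_of_le (Nat.div_le_div_right (f v).2.le)⟩)) (by simp) ?_
  intro f hf g hg hfg
  simp only [coe_filter, mem_univ, true_and, Set.mem_ofPred_eq, Prod.mk.injEq, funext_iff,
    Subtype.forall, Fin.mk.injEq, mem_compl] at hf hg hfg
  funext v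
  by_cases hv : v ∈ s
  · exact hfg.1 v hv
  · rw [Fin.ext_iff, ← Nat.div_add_mod (f v) m, ← Nat.div_add_mod (g v) m, hfg.2 v hv, hf v hv,
      hg v hv, hfg.1 _ (hw v hv)]

theorem monoCopies_turanColoring_le {H : SimpleGraph α} {s : Finset α} {w : α → α} {n k : ℕ}
    (hk : 2 ≤ k) (hs : ¬ (H.induce (s : Set α)).Colorable (k - 1))
    (hw : ∀ v ∉ s, w v ∈ s ∧ ∀ u, H.Adj v u ↔ u = w v) :
    monoCopies H (turanColoring n k) ≤ n ^ #s * (n / (k - 1) + 1) ^ (Fintype.card α - #s) := by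
  classical
  refine le_trans ?_ (card_filter_mod_eq_le n (k - 1) s w fun v hv => (hw v hv).1)
  rw [← card_monoCopyFinset]
  refine card_le_card fun f hf => mem_filter.2 ⟨mem_univ _, ?_⟩
  obtain ⟨-, col, hcol⟩ := mem_monoCopyFinset.1 hf
  have hred : col = 0 := by
    by_contra hc
    exact hs (colorable_of_turanColoring_eq_one hk (fun v : (s : Set α) => f v)
      fun v u hvu => (hcol v u hvu).trans (by omega))
  have := fun v hv => hcol v (w v) (((hw v hv).2 (w v)).2 rfl)
  simp_all [turanColoring_mk]

end Turan

section Ramsey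

theorem exists_isNClique_or_isNClique_compl {V : Type*} (G : SimpleGraph V) :
    ∀ (a b : ℕ) (A : Finset V), 2 ^ (a + b) ≤ #A → ∃ S ⊆ A, G.IsNClique a S ∨ Gᶜ.IsNClique b S
  | 0, _, _, _ => ⟨∅, empty_subset _, Or.inl (isNClique_empty.2 rfl)⟩
  | _ + 1, 0, _, _ => ⟨∅, empty_subset _, Or.inr (isNClique_empty.2 rfl)⟩
  | a + 1, b + 1, A, hA => by
    classical
    obtain ⟨x, hx⟩ : A.Nonempty := card_pos.1 ((Nat.two_pow_pos _).trans_le hA)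
    have hsplit : #{y ∈ A.erase x | G.Adj x y} + #{y ∈ A.erase x | ¬G.Adj x y} = #A - 1 := by
      rw [card_filter_add_card_filter_not, card_erase_of_mem hx]
    have hA' : A.erase x ⊆ A := erase_subset x A
    by_cases hnbr : 2 ^ (a + (b + 1)) ≤ #{y ∈ A.erase x | G.Adj x y}
    · obtain ⟨S, hS, hS' | hS'⟩ := exists_isNClique_or_isNClique_compl G a (b + 1) _ hnbr
      · refine ⟨insert x S, insert_subset hx (hS.trans ((filter_subset _ _).trans hA')),
          Or.inl (hS'.insert fun y hy => (mem_filter.1 (hS hy)).2)⟩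
      · exact ⟨S, hS.trans ((filter_subset _ _).trans hA'), Or.inr hS'⟩
    · have hnon : 2 ^ (a + 1 + b) ≤ #{y ∈ A.erase x | ¬G.Adj x y} := by
        rw [show a + 1 + (b + 1) = a + 1 + b + 1 by omega, pow_succ] at hA
        rw [show a + (b + 1) = a + 1 + b by omega] at hnbr
        omega
      obtain ⟨S, hS, hS' | hS'⟩ := exists_isNClique_or_isNClique_compl G (a + 1) b _ hnon
      · exact ⟨S, hS.trans ((filter_subset _ _).trans hA'), Or.inl hS'⟩
      · refine ⟨insert x S, insert_subset hx (hS.trans ((filter_subset _ _).trans hA')),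
          Or.inr (hS'.insert fun y hy => ?_)⟩
        obtain ⟨hy, hxy⟩ := mem_filter.1 (hS hy)
        exact (compl_adj G x y).2 ⟨(ne_of_mem_erase hy).symm, hxy⟩
termination_by a b => a + b

end Ramsey

section Supersaturation

variable {α : Type*}

theorem card_filter_superset_le [DecidableEq α] {S W : Finset α} (hSW : S ⊆ W) (R : ℕ) :
    #{A ∈ W.powersetCard R | S ⊆ A} ≤ (#W - #S).choose (R - #S) := by
  rw [← card_sdiff_of_subset hSW, ← card_powersetCard]
  refine card_le_card_of_injOn (· \ S) (fun A hA => ?_) fun A hA B hB hAB => ?_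
  · obtain ⟨hA, hSA⟩ := mem_filter.1 hA
    obtain ⟨hAW, hAR⟩ := mem_powersetCard.1 hA
    exact mem_powersetCard.2
      ⟨sdiff_subset_sdiff hAW subset_rfl, by rw [card_sdiff_of_subset hSA, hAR]⟩
  · rw [← sdiff_union_of_subset (mem_filter.1 hA).2, ← sdiff_union_of_subset (mem_filter.1 hB).2]
    exact congrArg (· ∪ S) hAB

theorem choose_le_card_filter_mul_choose {W : Finset α} {P : Finset α → Prop} [DecidablePred P]
    {h R : ℕ} (hhR : h ≤ R) (hRW : R ≤ #W) (hP : ∀ A ⊆ W, #A = R → ∃ S ⊆ A, #S = h ∧ P S) :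
    (#W).choose h ≤ #{S ∈ W.powersetCard h | P S} * R.choose h := by
  classical
  have hcount : #(W.powersetCard R) * 1 ≤
      #{S ∈ W.powersetCard h | P S} * (#W - h).choose (R - h) := by
    refine card_mul_le_card_mul (fun A S => S ⊆ A) (fun A hA => ?_) fun S hS => ?_
    · obtain ⟨hAW, hAR⟩ := mem_powersetCard.1 hA
      obtain ⟨S, hSA, hSh, hPS⟩ := hP A hAW hAR
      exact one_le_card.2 ⟨S, mem_filter.2
        ⟨mem_filter.2 ⟨mem_powersetCard.2 ⟨hSA.trans hAW, hSh⟩, hPS⟩, hSA⟩⟩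
    · obtain ⟨hSW, hSh⟩ := mem_powersetCard.1 (mem_filter.1 hS).1
      exact hSh ▸ card_filter_superset_le hSW R
  rw [card_powersetCard, mul_one] at hcount
  refine Nat.le_of_mul_le_mul_right ?_ (Nat.choose_pos (Nat.sub_le_sub_right hRW h))
  calc (#W).choose h * (#W - h).choose (R - h) = (#W).choose R * R.choose h :=
        (Nat.choose_mul hhR).symm
    _ ≤ #{S ∈ W.powersetCard h | P S} * (#W - h).choose (R - h) * R.choose h := by gcongr
    _ = _ := by ring

end Supersaturation

section Extensions

variable {α β : Type*} [Fintype α] [DecidableEq α] [Fintype β]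

open Classical in
noncomputable def extensionsOn (g : α → β) (s C : Finset α) (N : α → Finset β) :
    Finset (α → β) :=
  {f | Set.InjOn f ↑(s ∪ C) ∧ (∀ v ∈ C, f v ∈ N v) ∧ ∀ v ∉ C, f v = g v}

variable {g f : α → β} {s C : Finset α} {N : α → Finset β} {D : ℕ}

lemma mem_extensionsOn : f ∈ extensionsOn g s C N ↔
    Set.InjOn f ↑(s ∪ C) ∧ (∀ v ∈ C, f v ∈ N v) ∧ ∀ v ∉ C, f v = g v := by
  simp [extensionsOn]

lemma update_mem_extensionsOn_insert {a : α} (ha : a ∉ s ∪ C) (hf : f ∈ extensionsOn g s C N)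
    {y : β} (hyN : y ∈ N a) (hyf : y ∉ f '' ↑(s ∪ C)) :
    Function.update f a y ∈ extensionsOn g s (insert a C) N := by
  obtain ⟨hinj, hN, hg⟩ := mem_extensionsOn.1 hf
  have hupd : Set.EqOn (Function.update f a y) f ↑(s ∪ C) := fun v hv =>
    Function.update_of_ne (by rintro rfl; exact ha hv) _ _
  refine mem_extensionsOn.2 ⟨?_, fun v hv => ?_, fun v hv => ?_⟩
  · rw [union_insert, coe_insert, Set.injOn_insert (by simpa using ha), Function.update_self,
      hupd.image_eq]
    exact ⟨hinj.congr hupd.symm, hyf⟩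
  · rcases mem_insert.1 hv with rfl | hv
    · simpa using hyN
    · rw [hupd (mem_union_right s hv)]
      exact hN v hv
  · rw [Function.update_of_ne (by rintro rfl; exact hv (mem_insert_self _ C))]
    exact hg v (fun h => hv (mem_insert_of_mem h))

lemma card_extensionsOn_mul_le {a : α} (ha : a ∉ s ∪ C) (hD : D ≤ #(N a)) :
    #(extensionsOn g s C N) * (D - Fintype.card α) ≤ #(extensionsOn g s (insert a C) N) := by
  classical
  calc #(extensionsOn g s C N) * (D - Fintype.card α)
      ≤ ∑ f ∈ extensionsOn g s C N, #(N a \ (s ∪ C).image f) := by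
        rw [← smul_eq_mul, ← sum_const]
        gcongr with f
        have : #((s ∪ C).image f) ≤ Fintype.card α := card_image_le.trans (card_le_univ _)
        exact (tsub_le_tsub hD this).trans (le_card_sdiff _ _)
    _ = #((extensionsOn g s C N).sigma fun f => N a \ (s ∪ C).image f) := (card_sigma _ _).symm
    _ ≤ #(extensionsOn g s (insert a C) N) := by
      refine card_le_card_of_injOn (fun p => Function.update p.1 a p.2) ?_ ?_
      · rintro ⟨f, y⟩ hfy
        simp only [coe_sigma, Set.mem_sigma_iff, mem_coe] at hfy
        obtain ⟨hyN, hyf⟩ := mem_sdiff.1 hfy.2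
        exact update_mem_extensionsOn_insert ha hfy.1 hyN (by simpa using hyf)
      · rintro ⟨f, y⟩ hfy ⟨f', y'⟩ hfy' hff'
        simp only [coe_sigma, Set.mem_sigma_iff, mem_coe] at hfy hfy'
        have hfa : f a = f' a := by
          rw [(mem_extensionsOn.1 hfy.1).2.2 a fun h => ha (mem_union_right s h),
            (mem_extensionsOn.1 hfy'.1).2.2 a fun h => ha (mem_union_right s h)]
        have hy : y = y' := by simpa using congrFun hff' a
        have hf : f = f' := by
          funext v
          by_cases hv : v = a
          · exact hv ▸ hfa
          · simpa [hv] using congrFun hff' v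
        subst hf hy
        rfl

theorem pow_le_card_extensionsOn (hg : Set.InjOn g s) (hsC : Disjoint s C)
    (hD : ∀ v ∈ C, D ≤ #(N v)) : (D - Fintype.card α) ^ #C ≤ #(extensionsOn g s C N) := by
  induction C using Finset.induction_on with
  | empty => exact one_le_card.2 ⟨g, mem_extensionsOn.2 ⟨by simpa, by simp, fun _ _ => rfl⟩⟩
  | insert a C ha ih =>
    rw [disjoint_insert_right] at hsC
    rw [card_insert_of_notMem ha, pow_succ]
    calc _ ≤ #(extensionsOn g s C N) * (D - Fintype.card α) :=
          Nat.mul_le_mul_right _ (ih hsC.2 fun v hv => hD v (mem_insert_of_mem hv))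
      _ ≤ _ := card_extensionsOn_mul_le (by simp [ha, hsC.1]) (hD a (mem_insert_self a C))

end Extensions

section ColorGraph

variable {n c : ℕ}

def colorGraph (χ : Sym2 (Fin n) → Fin c) (col : Fin c) : SimpleGraph (Fin n) where
  Adj x y := x ≠ y ∧ χ s(x, y) = col
  symm := ⟨fun _ _ h => ⟨h.1.symm, Sym2.eq_swap ▸ h.2⟩⟩
  loopless := ⟨fun _ h => h.1 rfl⟩

instance (χ : Sym2 (Fin n) → Fin c) (col : Fin c) : DecidableRel (colorGraph χ col).Adj :=
  fun x y => inferInstanceAs (Decidable (x ≠ y ∧ χ s(x, y) = col))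

lemma colorDeg_eq_degree (χ : Sym2 (Fin n) → Fin c) (col : Fin c) (v : Fin n) :
    colorDeg χ col v = (colorGraph χ col).degree v := by
  rw [colorDeg, ← card_neighborFinset_eq_degree, ← Set.ncard_coe_finset, coe_neighborFinset]
  congr 1
  ext w
  simp [colorGraph, eq_comm]

lemma colorGraph_one_eq_compl (χ : Sym2 (Fin n) → Fin 2) :
    colorGraph χ 1 = (colorGraph χ 0)ᶜ := by
  ext x y
  simp only [colorGraph, compl_adj]
  omega

end ColorGraph

section LowerBound

variable {α : Type*} {H : SimpleGraph α} {s : Finset α} {w : α → α}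
  {n : ℕ} {χ : Sym2 (Fin n) → Fin 2} {col : Fin 2}

lemma adj_color_eq_of_pendant (hw : ∀ v ∉ s, w v ∈ s ∧ ∀ u, H.Adj v u ↔ u = w v) {f : α → Fin n}
    (hcore : ∀ v ∈ s, ∀ u ∈ s, H.Adj v u → χ s(f v, f u) = col)
    (hpend : ∀ v ∉ s, χ s(f (w v), f v) = col) (v u : α) (hvu : H.Adj v u) :
    χ s(f v, f u) = col := by
  by_cases hv : v ∈ s
  · by_cases hu : u ∈ s
    · exact hcore v hv u hu hvu
    · rw [(hw u hu).2 v |>.1 hvu.symm]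
      exact hpend u hu
  · rw [(hw v hv).2 u |>.1 hvu, Sym2.eq_swap]
    exact hpend v hv

variable [Fintype α]

/-- Fix a bijection `s → S`, then place the pendant vertices one by one, each in the
`col`-neighbourhood of the image of its anchor. -/
lemma pow_le_card_filter_image_eq [NeZero n] (hw : ∀ v ∉ s, w v ∈ s ∧ ∀ u, H.Adj v u ↔ u = w v)
    {S : Finset (Fin n)} (hS : (colorGraph χ col).IsNClique #s S) {D : ℕ}
    (hD : ∀ x ∈ S, D ≤ colorDeg χ col x) :
    (D - Fintype.card α) ^ (Fintype.card α - #s) ≤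
      #{f ∈ monoCopyFinset H χ | s.image f = S} := by
  classical
  obtain ⟨g, hg⟩ : ∃ g : α → Fin n, Set.BijOn g s S :=
    s.finite_toSet.exists_bijOn_of_encard_eq (by simp [hS.card_eq])
  rw [← card_compl]
  refine (pow_le_card_extensionsOn (N := fun v => (colorGraph χ col).neighborFinset (g (w v)))
    hg.injOn disjoint_compl_right fun v hv => ?_).trans (card_le_card fun f hf => ?_)
  · rw [card_neighborFinset_eq_degree, ← colorDeg_eq_degree]
    exact hD _ (hg.mapsTo (hw v (mem_compl.1 hv)).1)
  obtain ⟨hinj, hN, hfg⟩ := mem_extensionsOn.1 hf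
  have hfg : ∀ v ∈ s, f v = g v := fun v hv => hfg v (notMem_compl.2 hv)
  rw [union_compl, coe_univ, Set.injOn_univ] at hinj
  refine mem_filter.2 ⟨mem_monoCopyFinset.2 ⟨hinj, col, adj_color_eq_of_pendant hw ?_ ?_⟩, ?_⟩
  · intro v hv u hu hvu
    rw [hfg v hv, hfg u hu]
    exact (hS.isClique (hg.mapsTo hv) (hg.mapsTo hu) (hg.injOn.ne hv hu hvu.ne)).2
  · intro v hv
    rw [hfg _ (hw v hv).1]
    exact ((mem_neighborFinset _ _ _).1 (hN v (mem_compl.2 hv))).2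
  · rw [← coe_inj, coe_image, ← hg.image_eq]
    exact Set.image_congr hfg

theorem card_mul_pow_le_monoCopies [NeZero n] (hw : ∀ v ∉ s, w v ∈ s ∧ ∀ u, H.Adj v u ↔ u = w v)
    (W : Finset (Fin n)) {D : ℕ} (hD : ∀ x ∈ W, ∀ col, D ≤ colorDeg χ col x) :
    #{S ∈ W.powersetCard #s | ∃ col, (colorGraph χ col).IsNClique #s S} *
      (D - Fintype.card α) ^ (Fintype.card α - #s) ≤ monoCopies H χ := by
  rw [← card_monoCopyFinset, ← sum_const_nat fun _ _ => rfl]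
  calc _ ≤ ∑ S ∈ W.powersetCard #s with ∃ col, (colorGraph χ col).IsNClique #s S,
        #{f ∈ monoCopyFinset H χ | s.image f = S} := by
        refine sum_le_sum fun S hS => ?_
        obtain ⟨hSW, col, hS⟩ := mem_filter.1 hS
        exact pow_le_card_filter_image_eq hw hS fun x hx => hD x ((mem_powersetCard.1 hSW).1 hx) col
    _ = _ := sum_card_fiberwise_eq_card_filter _ _ _
    _ ≤ _ := card_filter_le _ _

theorem pow_mul_pow_le_monoCopies [NeZero n] (hw : ∀ v ∉ s, w v ∈ s ∧ ∀ u, H.Adj v u ↔ u = w v)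
    {W : Finset (Fin n)} (hW : 4 ^ #s ≤ #W) {D : ℕ} (hD : ∀ x ∈ W, ∀ col, D ≤ colorDeg χ col x) :
    (#W - #s) ^ #s * (D - Fintype.card α) ^ (Fintype.card α - #s) ≤
      (#s)! * (4 ^ #s).choose #s * monoCopies H χ := by
  have hsupersat := choose_le_card_filter_mul_choose
    (P := fun S => ∃ col, (colorGraph χ col).IsNClique #s S)
    (Nat.lt_pow_self (by norm_num)).le hW fun A _ hA => by
      obtain ⟨S, hSA, hS | hS⟩ := exists_isNClique_or_isNClique_compl (colorGraph χ 0) #s #s A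
        (by rw [hA, ← two_mul, pow_mul]; norm_num)
      · exact ⟨S, hSA, hS.card_eq, 0, hS⟩
      · exact ⟨S, hSA, hS.card_eq, 1, colorGraph_one_eq_compl χ ▸ hS⟩
  have hdesc : (#W - #s) ^ #s ≤ (#s)! * (#W).choose #s := by
    rw [← Nat.descFactorial_eq_factorial_mul_choose]
    exact (Nat.pow_le_pow_left (by omega) _).trans (Nat.pow_sub_le_descFactorial _ _)
  calc _ ≤ (#s)! * (#W).choose #s * (D - Fintype.card α) ^ (Fintype.card α - #s) := by gcongr
    _ ≤ (#s)! * (#{S ∈ W.powersetCard #s | ∃ col, (colorGraph χ col).IsNClique #s S} *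
          (4 ^ #s).choose #s) * (D - Fintype.card α) ^ (Fintype.card α - #s) := by gcongr
    _ = (#s)! * (4 ^ #s).choose #s *
          (#{S ∈ W.powersetCard #s | ∃ col, (colorGraph χ col).IsNClique #s S} *
          (D - Fintype.card α) ^ (Fintype.card α - #s)) := by ring
    _ ≤ _ := by gcongr; exact card_mul_pow_le_monoCopies hw W hD

end LowerBound

section Numerics

lemma lamParam_eq (h k : ℕ) : lamParam h k = 2 * ((4 * 10 ^ 8 * h ^ 4 * k ^ 4 : ℕ) : ℝ)⁻¹ := by
  rw [lamParam]
  push_cast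
  ring

lemma factorial_mul_choose_le (h : ℕ) : h ! * (4 ^ h).choose h ≤ 4 ^ (h * h) := by
  rw [← Nat.descFactorial_eq_factorial_mul_choose, pow_mul]
  exact Nat.descFactorial_le_pow _ _

lemma pow_lt_one_add_inv_pow {Λ j m : ℕ} (hΛ : 1 ≤ Λ) (hj : j ≠ 0) (hm : 4 * Λ ^ 2 * j ≤ m) :
    (4 * Λ : ℝ) ^ j < (1 + (Λ : ℝ)⁻¹) ^ m := by
  have hΛ₀ : (0 : ℝ) ≤ Λ := Nat.cast_nonneg Λ
  have hbernoulli : 1 + 4 * (Λ : ℝ) ≤ (1 + (Λ : ℝ)⁻¹) ^ (4 * Λ ^ 2) := by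
    have h4Λ : ((4 * Λ ^ 2 : ℕ) : ℝ) * (Λ : ℝ)⁻¹ = 4 * Λ := by
      push_cast
      field_simp
    have := one_add_mul_le_pow (a := (Λ : ℝ)⁻¹) (by linarith [inv_nonneg.2 hΛ₀]) (4 * Λ ^ 2)
    rwa [h4Λ] at this
  calc (4 * Λ : ℝ) ^ j < (1 + 4 * Λ) ^ j := pow_lt_pow_left₀ (by linarith) (by positivity) hj
    _ ≤ ((1 + (Λ : ℝ)⁻¹) ^ (4 * Λ ^ 2)) ^ j := pow_le_pow_left₀ (by positivity) hbernoulli j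
    _ = (1 + (Λ : ℝ)⁻¹) ^ (4 * Λ ^ 2 * j) := (pow_mul _ _ _).symm
    _ ≤ _ := pow_le_pow_right₀ (le_add_of_nonneg_right (by positivity)) hm

lemma factorial_mul_choose_lt {Λ h m : ℕ} (hΛ : 1 ≤ Λ) (hh : h ≠ 0)
    (hm : 4 * Λ ^ 2 * (h * h) ≤ m) :
    ((h ! * (4 ^ h).choose h : ℕ) : ℝ) < (Λ : ℝ)⁻¹ ^ h * (1 + (Λ : ℝ)⁻¹) ^ m := by
  have hΛ' : (1 : ℝ) ≤ Λ := by exact_mod_cast hΛ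
  rw [inv_pow, inv_mul_eq_div, lt_div_iff₀ (by positivity)]
  calc ((h ! * (4 ^ h).choose h : ℕ) : ℝ) * Λ ^ h ≤ 4 ^ (h * h) * Λ ^ (h * h) := by
        gcongr
        · exact_mod_cast factorial_mul_choose_le h
        · exact Nat.le_mul_self h
    _ = (4 * Λ) ^ (h * h) := (mul_pow _ _ _).symm
    _ < _ := pow_lt_one_add_inv_pow hΛ (by positivity) hm

lemma pow_mul_pow_le_of_le_mul {a b x y c d K : ℝ} {i j : ℕ} (hx : 0 < x) (hy : 0 < y)
    (hc : 0 ≤ c) (hd : 0 ≤ d) (ha : c * x ≤ a) (hb : d * y ≤ b)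
    (h : a ^ i * b ^ j ≤ K * (x ^ i * y ^ j)) : c ^ i * d ^ j ≤ K := by
  have ha₀ : 0 ≤ a := (mul_nonneg hc hx.le).trans ha
  refine le_of_mul_le_mul_right ?_ (by positivity : 0 < x ^ i * y ^ j)
  calc c ^ i * d ^ j * (x ^ i * y ^ j) = (c * x) ^ i * (d * y) ^ j := by ring
    _ ≤ a ^ i * b ^ j := by gcongr
    _ ≤ _ := h

lemma one_add_mul_le_ceil_sub {x μ : ℝ} {m t : ℕ} (hμ₀ : 0 ≤ μ) (hμ₁ : μ ≤ 1)
    (hm : (m : ℝ) ≤ x) (ht : t + 2 ≤ μ * x) :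
    (1 + μ) * (m + 1) ≤ ((⌈(1 + 2 * μ) * x⌉₊ - t : ℕ) : ℝ) := by
  have hceil := Nat.le_ceil ((1 + 2 * μ) * x)
  have hx : 0 ≤ x := (Nat.cast_nonneg m).trans hm
  rw [Nat.cast_sub (by exact_mod_cast (show (t : ℝ) ≤ _ by nlinarith).trans hceil)]
  nlinarith

lemma eventually_le_mul_and_le_mul_div (a b : ℝ) {μ κ : ℝ} (hμ : 0 < μ) (hκ : 0 < κ) :
    ∀ᶠ n : ℕ in atTop, a ≤ μ * n ∧ b ≤ μ * (n / κ) :=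
  ((tendsto_natCast_atTop_atTop.const_mul_atTop hμ).eventually_ge_atTop a).and
    (((tendsto_natCast_atTop_atTop.atTop_div_const hκ).const_mul_atTop hμ).eventually_ge_atTop b)

lemma four_mul_sq_mul_add_le (h k : ℕ) (hh : 1 ≤ h) (hk : 1 ≤ k) :
    4 * (4 * 10 ^ 8 * h ^ 4 * k ^ 4) ^ 2 * (h * h) + h ≤ (1000 * k * h) ^ 10 * h ^ (10 * k) := by
  have hh10 : h ≤ h ^ 10 * k ^ 10 :=
    (Nat.le_self_pow (by norm_num) h).trans (Nat.le_mul_of_pos_right _ (by positivity))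
  calc 4 * (4 * 10 ^ 8 * h ^ 4 * k ^ 4) ^ 2 * (h * h) + h
      = 64 * 10 ^ 16 * (h ^ 10 * k ^ 8) + h := by ring
    _ ≤ 64 * 10 ^ 16 * (h ^ 10 * k ^ 10) + h ^ 10 * k ^ 10 := by gcongr; norm_num
    _ ≤ 10 ^ 30 * (h ^ 10 * k ^ 10) := by omega
    _ = (1000 * k * h) ^ 10 * 1 := by ring
    _ ≤ _ := Nat.mul_le_mul_left _ (Nat.one_le_pow _ _ hh)

end Numerics

section Minimizer

variable {α : Type*} [Fintype α] {H : SimpleGraph α} {s : Finset α} {w : α → α} {k n : ℕ}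

theorem pow_mul_pow_le_of_monoCopies_eq_minMono (hk : 2 ≤ k)
    (hnc : ¬ (H.induce (s : Set α)).Colorable (k - 1))
    (hw : ∀ v ∉ s, w v ∈ s ∧ ∀ u, H.Adj v u ↔ u = w v) {χ : Sym2 (Fin n) → Fin 2}
    (hχ : monoCopies H χ = minMono H n 2) [NeZero n] {W : Finset (Fin n)} (hW : 4 ^ #s ≤ #W)
    {D : ℕ} (hD : ∀ x ∈ W, ∀ col, D ≤ colorDeg χ col x) :
    (#W - #s) ^ #s * (D - Fintype.card α) ^ (Fintype.card α - #s) ≤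
      (#s)! * (4 ^ #s).choose #s * (n ^ #s * (n / (k - 1) + 1) ^ (Fintype.card α - #s)) :=
  (pow_mul_pow_le_monoCopies hw hW hD).trans <| Nat.mul_le_mul_left _ <|
    (hχ.trans_le (minMono_le H _)).trans (monoCopies_turanColoring_le hk hnc hw)

theorem card_lt_of_monoCopies_eq_minMono (hk : 2 ≤ k)
    (hnc : ¬ (H.induce (s : Set α)).Colorable (k - 1))
    (hw : ∀ v ∉ s, w v ∈ s ∧ ∀ u, H.Adj v u ↔ u = w v) {χ : Sym2 (Fin n) → Fin 2}
    (hχ : monoCopies H χ = minMono H n 2) {Λ : ℕ} (hΛ : 1 ≤ Λ) (hs : #s ≠ 0)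
    (hm : 4 * Λ ^ 2 * (#s * #s) ≤ Fintype.card α - #s)
    (hn : Fintype.card α + 2 ≤ (Λ : ℝ)⁻¹ * (n / ((k : ℝ) - 1))) {W : Finset (Fin n)}
    (hW : ∀ x ∈ W, ∀ col, (1 + 2 * (Λ : ℝ)⁻¹) * (n / ((k : ℝ) - 1)) ≤ colorDeg χ col x) :
    (#W : ℝ) < 4 ^ #s + #s + (Λ : ℝ)⁻¹ * n := by
  by_contra! hWcard
  have hμ : (0 : ℝ) ≤ (Λ : ℝ)⁻¹ := by positivity
  have hW₁ : 4 ^ #s ≤ #W := by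
    have : ((4 ^ #s : ℕ) : ℝ) ≤ #W := by push_cast; nlinarith
    exact_mod_cast this
  have hW₂ : (Λ : ℝ)⁻¹ * n ≤ ((#W - #s : ℕ) : ℝ) := by
    rw [Nat.cast_sub ((Nat.lt_pow_self (by norm_num)).le.trans hW₁)]
    linarith [(by positivity : (0 : ℝ) ≤ 4 ^ #s)]
  have hDn := one_add_mul_le_ceil_sub hμ (inv_le_one_of_one_le₀ (by exact_mod_cast hΛ))
    (by simpa [Nat.cast_sub (by omega : 1 ≤ k)] using
      Nat.cast_div_le (α := ℝ) (m := n) (n := k - 1)) hn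
  have : NeZero n := .of_pos <| (Nat.pow_pos (by norm_num)).trans_le <|
    hW₁.trans ((card_le_univ W).trans_eq (Fintype.card_fin n))
  have := pow_mul_pow_le_of_le_mul (K := (((#s)! * (4 ^ #s).choose #s : ℕ) : ℝ))
    (Nat.cast_pos.2 (NeZero.pos n)) (by positivity) hμ (by positivity) hW₂ hDn <| by
      exact_mod_cast pow_mul_pow_le_of_monoCopies_eq_minMono hk hnc hw hχ hW₁
        fun x hx col => Nat.ceil_le.2 (hW x hx col)
  exact (factorial_mul_choose_lt hΛ hs hm).not_ge this

end Minimizer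

theorem statement8 (k h t : ℕ) (hk : 4 ≤ k)
    (H : SimpleGraph (Fin t)) (s : Finset (Fin t)) (hcard : s.card = h)
    (hcrit : IsKCritical (H.induce (s : Set (Fin t))) k)
    (hpend : PendantOutside H s)
    (ht : (1000 * k * h) ^ 10 * h ^ (10 * k) ≤ t) :
    ∃ N : ℕ, ∀ n ≥ N, ∀ χ : Sym2 (Fin n) → Fin 2, monoCopies H χ = minMono H n 2 →
      (Set.ncard {v : Fin n |
          (1 + lamParam h k) * n / ((k : ℝ) - 1) ≤ (colorDeg χ 0 v : ℝ) ∧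
          (1 + lamParam h k) * n / ((k : ℝ) - 1) ≤ (colorDeg χ 1 v : ℝ)} : ℝ) ≤
        lamParam h k * n := by
  subst hcard
  obtain ⟨w, hw⟩ := hpend.exists_anchor
  have hkh : k ≤ #s := by simpa using hcrit.le_card
  set Λ := 4 * 10 ^ 8 * #s ^ 4 * k ^ 4
  have hΛ : 1 ≤ Λ :=
    Nat.mul_pos (Nat.mul_pos (by norm_num) (Nat.pow_pos (by omega))) (Nat.pow_pos (by omega))
  have hexp : 4 * Λ ^ 2 * (#s * #s) + #s ≤ t :=
    (four_mul_sq_mul_add_le #s k (by omega) (by omega)).trans ht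
  have hμ : (0 : ℝ) < (Λ : ℝ)⁻¹ := by positivity
  have hk₁ : (0 : ℝ) < k - 1 := sub_pos.2 (by exact_mod_cast (by omega : 1 < k))
  obtain ⟨N, hN⟩ := eventually_atTop.1 <|
    eventually_le_mul_and_le_mul_div (4 ^ #s + #s) (t + 2) hμ hk₁
  refine ⟨N, fun n hn χ hχ => ?_⟩
  have hlam : lamParam #s k = 2 * (Λ : ℝ)⁻¹ := lamParam_eq _ _
  have hW := card_lt_of_monoCopies_eq_minMono (by omega) (hcrit.not_colorable (by omega)) hw hχ hΛ
    (by omega) (by simpa using Nat.le_sub_of_add_le hexp) (by simpa using (hN n hn).2)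
    (W := {v | (1 + lamParam #s k) * n / ((k : ℝ) - 1) ≤ colorDeg χ 0 v ∧
      (1 + lamParam #s k) * n / ((k : ℝ) - 1) ≤ colorDeg χ 1 v})
    fun x hx col => by fin_cases col <;> simp_all [mul_div_assoc]
  rw [← Set.ncard_coe_finset, coe_filter_univ] at hW
  rw [hlam] at hW ⊢
  linarith [(hN n hn).1]
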